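/- Let a, τ, r be integers with 1 < a ≤ τ and 1 ≤ r < τ. Then the optimal rate of an (a,τ,r) locally recoverable streaming code equals min{(τ+1−a)/(τ+1), r/(r+1)}: (i) every (a,τ,r) LRSC (over any finite field F, any parameters n > k ≥ 1) has rate k/n ≤ min{(τ+1−a)/(τ+1), r/(r+1)}, and (ii) there exist a finite field and an (a,τ,r) LRSC over it whose rate equals min{(τ+1−a)/(τ+1), r/(r+1)}. -/

import Mathlib

/-- A packet-level code with a causal systematic encoder: the parity part of the
coded packet at time `t` is a fixed function of the message packets at times `≤ t`.
The coded packet at time `t` is `c(t) = (m(t), parity m t) ∈ F^n` with `k` message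
symbols and `n - k` parity symbols. -/
structure PacketCode (F : Type) (k n : ℕ) where
  parity : (ℤ → Fin k → F) → ℤ → Fin (n - k) → F
  causal : ∀ (m m' : ℤ → Fin k → F) (t : ℤ),
    (∀ t' ≤ t, m t' = m' t') → parity m t = parity m' t

/-- A valid message stream vanishes at negative times. -/
def IsMsgStream {F : Type} [Zero F] {k : ℕ} (m : ℤ → Fin k → F) : Prop :=
  ∀ t < 0, m t = 0

/-- `(a, τ)` streaming-code property: for every `t ≥ 0` and every erasure set
`E ⊆ {t,…,t+τ}` with `t ∈ E` and `|E| ≤ a`, the message packet `m(t)` is uniquely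
determined by the unerased coded packets in the window together with the past
message packets. -/
def IsSC {F : Type} [Zero F] {k n : ℕ} (C : PacketCode F k n) (a τ : ℕ) : Prop :=
  ∀ m m' : ℤ → Fin k → F, IsMsgStream m → IsMsgStream m' →
    ∀ t : ℤ, 0 ≤ t →
      ∀ E : Finset ℤ, (∀ x ∈ E, t ≤ x ∧ x ≤ t + τ) → t ∈ E → E.card ≤ a →
        (∀ t' < t, m t' = m' t') →
        (∀ t' : ℤ, t ≤ t' → t' ≤ t + τ → t' ∉ E →
          m t' = m' t' ∧ C.parity m t' = C.parity m' t') →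
        m t = m' t

/-- `(a, τ, r)` locally recoverable streaming code: simultaneously an `(a,τ)` SC
and a `(1,r)` SC. -/
def IsLRSC {F : Type} [Zero F] {k n : ℕ} (C : PacketCode F k n) (a τ r : ℕ) : Prop :=
  IsSC C a τ ∧ IsSC C 1 r

/-!
Converse. Erase the first `A` packets of each of `N` consecutive periods of length `w + 1`.
An `(A, w)` streaming code recovers these erasures one after another, so the parity symbols of
the unerased packets determine all erased messages. Counting gives
`k N A ≤ (n - k) (N (w + 1 - A) + w + 1)` for every `N`, hence `k A ≤ (n - k) (w + 1 - A)`,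
i.e. `k / n ≤ (w + 1 - A) / (w + 1)`; apply this to `(a, τ)` and to `(1, r)`.

Achievability. Let `T = min (τ + 1) (a (r + 1))`, `k = T - a`, `n = T`, and let the `a` parity
symbols at time `u` be combinations of the messages at times `u - T + 1, …, u - 1` with
coefficients `B ^ 2 ^ j`, all exponents `j` distinct. Given erasures `E` in a window starting at
`t`, a cut `Θ` maximising `a (Θ - t) - T #(E ∩ [t, Θ))` satisfies Hall's condition, so the erased
message symbols before `Θ` can be matched injectively with later unerased parity equations. In
the resulting square system distinct permutations contribute distinct powers `B ^ (∑ 2 ^ j)`, so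
the largest one dominates and the integer determinant is nonzero; it is bounded independently of
the erasure pattern, hence nonzero modulo a large prime `p`. A single erasure is recovered from
the next `r` packets because `T ≤ a (r + 1)`.
-/

open Finset
open scoped Nat Matrix

theorem Nat.le_of_forall_mul_le_mul_add {x y c : ℕ} (h : ∀ N, N * x ≤ N * y + c) : x ≤ y := by
  by_contra! hxy
  nlinarith [h (c + 1)]

theorem intCast_zmod_injOn_Icc (x : ℤ) (w : ℕ) :
    Set.InjOn (fun y : ℤ => (y : ZMod (w + 1))) (Set.Icc x (x + w)) := by
  intro y hy z hz h
  have hdvd := (ZMod.intCast_eq_intCast_iff_dvd_sub y z (w + 1)).1 h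
  have := Int.eq_zero_of_abs_lt_dvd hdvd (by
    rw [abs_lt]; push_cast; constructor <;> linarith [hy.1, hy.2, hz.1, hz.2])
  linarith

def burstPattern (N A w : ℕ) : Finset ℤ :=
  (range N ×ˢ range A).image fun q => ((q.1 * (w + 1) + q.2 : ℕ) : ℤ)

theorem card_burstPattern {N A w : ℕ} (hAw : A ≤ w + 1) :
    #(burstPattern N A w) = N * A := by
  rw [burstPattern, card_image_of_injOn, card_product, card_range, card_range]
  intro q hq q' hq' h
  simp only [coe_product, coe_range, Set.mem_prod, Set.mem_Iio] at hq hq'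
  have h' : q.1 * (w + 1) + q.2 = q'.1 * (w + 1) + q'.2 := Nat.cast_injective h
  have hdm : ∀ d m, m < w + 1 → (d * (w + 1) + m) / (w + 1) = d ∧ (d * (w + 1) + m) % (w + 1) = m :=
    fun d m hm => (Nat.div_mod_unique (by omega)).2 ⟨by ring, hm⟩
  obtain ⟨h1, h2⟩ := hdm q.1 q.2 (by omega)
  obtain ⟨h1', h2'⟩ := hdm q'.1 q'.2 (by omega)
  rw [h'] at h1 h2
  exact Prod.ext (h1.symm.trans h1') (h2.symm.trans h2')

theorem burstPattern_bounds {N A w : ℕ} (hAw : A ≤ w + 1) {x : ℤ} (hx : x ∈ burstPattern N A w) :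
    0 ≤ x ∧ x < (N * (w + 1) : ℕ) := by
  obtain ⟨⟨q, s⟩, hqs, rfl⟩ := mem_image.1 hx
  simp only [mem_product, mem_range] at hqs
  refine ⟨by positivity, Nat.cast_lt.2 ?_⟩
  nlinarith

theorem card_burstPattern_inter_Icc_le (N A w : ℕ) (x : ℤ) :
    #(burstPattern N A w ∩ Icc x (x + w)) ≤ A := by
  have hsub : (burstPattern N A w ∩ Icc x (x + w)).image (fun y : ℤ => (y : ZMod (w + 1))) ⊆
      (range A).image (fun s : ℕ => (s : ZMod (w + 1))) := by
    intro y hy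
    obtain ⟨_, hx, rfl⟩ := mem_image.1 hy
    obtain ⟨⟨q, s⟩, hqs, rfl⟩ := mem_image.1 (mem_inter.1 hx).1
    exact mem_image.2 ⟨s, (mem_product.1 hqs).2, by simp⟩
  calc #(burstPattern N A w ∩ Icc x (x + w))
      = #((burstPattern N A w ∩ Icc x (x + w)).image (fun y : ℤ => (y : ZMod (w + 1)))) :=
        (card_image_of_injOn ((intCast_zmod_injOn_Icc x w).mono fun y hy =>
          by simpa using (mem_inter.1 hy).2)).symm
    _ ≤ #((range A).image (fun s : ℕ => (s : ZMod (w + 1)))) := card_le_card hsub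
    _ ≤ A := card_image_le.trans (card_range A).le

section Converse

variable {F : Type} [Zero F] {k n A w : ℕ} {C : PacketCode F k n}

theorem IsSC.mono {w' : ℕ} (h : IsSC C A w) (hw : w ≤ w') : IsSC C A w' := by
  intro m m' hm hm' t ht E hE htE hcard hpast hun
  refine h m m' hm hm' t ht {x ∈ E | x ≤ t + w} (fun x hx => ⟨(hE x (mem_filter.1 hx).1).1,
    (mem_filter.1 hx).2⟩) (mem_filter.2 ⟨htE, by omega⟩) ((card_filter_le _ _).trans hcard)
    hpast fun t' h1 h2 h3 => hun t' h1 (by omega) fun h => h3 (mem_filter.2 ⟨h, h2⟩)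

theorem IsSC.eq_of_parity_eq (hC : IsSC C A w) {P : Finset ℤ} {L : ℤ}
    (hP : ∀ x ∈ P, 0 ≤ x ∧ x < L) (hPw : ∀ x ∈ P, #(P ∩ Icc x (x + w)) ≤ A)
    {m m' : ℤ → Fin k → F} (hm : ∀ x ∉ P, m x = 0) (hm' : ∀ x ∉ P, m' x = 0)
    (hpar : ∀ u ∈ Icc 0 (L + w) \ P, C.parity m u = C.parity m' u) : m = m' := by
  have hstream : ∀ {m : ℤ → Fin k → F}, (∀ x ∉ P, m x = 0) → IsMsgStream m :=
    fun h x hx => h x fun hxP => by linarith [(hP x hxP).1]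
  suffices ∀ N : ℕ, ∀ x : ℤ, x < N → m x = m' x from
    funext fun x => this (x.toNat + 1) x (by omega)
  intro N
  induction N with
  | zero =>
    intro x hx
    have hxP : x ∉ P := fun h => by have := (hP x h).1; omega
    rw [hm x hxP, hm' x hxP]
  | succ N ih =>
    intro x hx
    by_cases hxP : x ∈ P
    · obtain ⟨hx0, hxL⟩ := hP x hxP
      refine hC m m' (hstream hm) (hstream hm') x hx0 (P ∩ Icc x (x + w))
        (fun y hy => mem_Icc.1 (mem_inter.1 hy).2)
        (mem_inter.2 ⟨hxP, mem_Icc.2 ⟨le_rfl, by omega⟩⟩) (hPw x hxP)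
        (fun t' ht' => ih t' (by omega)) fun t' h1 h2 h3 => ?_
      have ht'P : t' ∉ P := fun h => h3 (mem_inter.2 ⟨h, mem_Icc.2 ⟨h1, h2⟩⟩)
      exact ⟨by rw [hm _ ht'P, hm' _ ht'P],
        hpar t' (mem_sdiff.2 ⟨mem_Icc.2 ⟨by omega, by omega⟩, ht'P⟩)⟩
    · rw [hm x hxP, hm' x hxP]

theorem IsSC.mul_card_le [Fintype F] [Nontrivial F] (hC : IsSC C A w) {P : Finset ℤ} {L : ℤ}
    (hP : ∀ x ∈ P, 0 ≤ x ∧ x < L) (hPw : ∀ x ∈ P, #(P ∩ Icc x (x + w)) ≤ A) :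
    k * #P ≤ (n - k) * #(Icc 0 (L + w) \ P) := by
  let extend (v : P → Fin k → F) (x : ℤ) : Fin k → F := if h : x ∈ P then v ⟨x, h⟩ else 0
  have hinj : Function.Injective
      fun (v : P → Fin k → F) (u : ↥(Icc 0 (L + w) \ P)) => C.parity (extend v) u := by
    intro v v' h
    have := hC.eq_of_parity_eq hP hPw (m := extend v) (m' := extend v')
      (fun x hx => dif_neg hx) (fun x hx => dif_neg hx) fun u hu => congrFun h ⟨u, hu⟩
    funext x
    simpa [extend] using congrFun this x
  have := Fintype.card_le_of_injective _ hinj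
  simp only [Fintype.card_fun, Fintype.card_fin, Fintype.card_coe, ← pow_mul] at this
  exact (pow_le_pow_iff_right₀ Fintype.one_lt_card).1 this

theorem IsSC.mul_le_mul_sub [Fintype F] [Nontrivial F] (hC : IsSC C A w) (hAw : A ≤ w + 1) :
    k * A ≤ (n - k) * (w + 1 - A) := by
  refine Nat.le_of_forall_mul_le_mul_add (c := (n - k) * (w + 1)) fun N => ?_
  have h := hC.mul_card_le (fun x hx => burstPattern_bounds hAw hx)
    fun x _ => card_burstPattern_inter_Icc_le N A w x
  have hsub : burstPattern N A w ⊆ Icc 0 (((N * (w + 1) : ℕ) : ℤ) + w) := fun x hx => by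
    have := burstPattern_bounds hAw hx; exact mem_Icc.2 ⟨this.1, by omega⟩
  have hNA : N * A ≤ N * (w + 1) := Nat.mul_le_mul_left N hAw
  have hU : #(Icc 0 (((N * (w + 1) : ℕ) : ℤ) + w) \ burstPattern N A w) =
      N * (w + 1 - A) + (w + 1) := by
    rw [card_sdiff_of_subset hsub, Int.card_Icc, card_burstPattern hAw, Nat.mul_sub]
    omega
  rw [hU, card_burstPattern hAw] at h
  calc N * (k * A) = k * (N * A) := by ring
    _ ≤ (n - k) * (N * (w + 1 - A) + (w + 1)) := h
    _ = N * ((n - k) * (w + 1 - A)) + (n - k) * (w + 1) := by ring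

theorem IsSC.rate_le [Fintype F] [Nontrivial F] (hC : IsSC C A w) (hA : 1 ≤ A)
    (hAw : A ≤ w + 1) :
    (k : ℚ) / n ≤ ((w : ℚ) + 1 - A) / ((w : ℚ) + 1) := by
  have h := hC.mul_le_mul_sub hAw
  have hkn : k ≤ n := by
    by_contra! hnk
    rw [Nat.sub_eq_zero_of_le hnk.le, zero_mul] at h
    nlinarith
  rcases Nat.eq_zero_or_pos n with rfl | hn
  · simp only [CharP.cast_eq_zero, div_zero]
    have : (A : ℚ) ≤ w + 1 := by exact_mod_cast hAw
    exact div_nonneg (by linarith) (by positivity)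
  have hQ : (k : ℚ) * A ≤ (n - k) * (w + 1 - A) := by exact_mod_cast h
  rw [div_le_div_iff₀ (by positivity) (by positivity)]
  nlinarith

end Converse

theorem sum_units_mul_pow_ne_zero {ι : Type*} {A : Finset ι} (hA : A.Nonempty) (ε : ι → ℤˣ)
    {s : ι → ℕ} (hs : Set.InjOn s A) {B : ℤ} (hB : (#A : ℤ) < B) :
    ∑ i ∈ A, (ε i : ℤ) * B ^ s i ≠ 0 := by
  classical
  obtain ⟨i₀, hi₀, hmax⟩ := exists_max_image A s hA
  have hB0 : 0 < B := by have := hA.card_pos; omega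
  have hlt : ∀ i ∈ A.erase i₀, s i + 1 ≤ s i₀ := fun i hi =>
    lt_of_le_of_ne (hmax i (mem_of_mem_erase hi))
      fun h => ne_of_mem_erase hi (hs (mem_of_mem_erase hi) hi₀ h)
  have hrest : |∑ i ∈ A.erase i₀, (ε i : ℤ) * B ^ s i| * B ≤ (#A - 1 : ℤ) * B ^ s i₀ :=
    calc |∑ i ∈ A.erase i₀, (ε i : ℤ) * B ^ s i| * B
        ≤ (∑ i ∈ A.erase i₀, |(ε i : ℤ) * B ^ s i|) * B :=
          mul_le_mul_of_nonneg_right (abs_sum_le_sum_abs _ _) hB0.le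
      _ = ∑ i ∈ A.erase i₀, B ^ (s i + 1) := by
          rw [sum_mul]
          refine sum_congr rfl fun i _ => ?_
          rw [abs_mul, Int.isUnit_iff_abs_eq.1 (ε i).isUnit, one_mul,
            abs_of_pos (pow_pos hB0 _), pow_succ]
      _ ≤ ∑ _i ∈ A.erase i₀, B ^ s i₀ :=
          sum_le_sum fun i hi => pow_le_pow_right₀ (by omega) (hlt i hi)
      _ = (#A - 1 : ℤ) * B ^ s i₀ := by
          rw [sum_const, card_erase_of_mem hi₀, nsmul_eq_mul, Nat.cast_sub hA.card_pos,
            Nat.cast_one]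
  intro h
  rw [← add_sum_erase A _ hi₀] at h
  have h' : |∑ i ∈ A.erase i₀, (ε i : ℤ) * B ^ s i| = B ^ s i₀ := by
    rw [eq_neg_of_add_eq_zero_right h, abs_neg, abs_mul, Int.isUnit_iff_abs_eq.1 (ε i₀).isUnit,
      one_mul, abs_of_pos (pow_pos hB0 _)]
  rw [h'] at hrest
  nlinarith [pow_pos hB0 (s i₀)]

theorem perm_eq_of_image_eq {κ : Type*} [Fintype κ] [DecidableEq κ] {supp : κ → κ → Prop}
    {g : κ × κ → ℕ} (hg : Set.InjOn g {x | supp x.1 x.2}) {π π' : Equiv.Perm κ}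
    (hπ : ∀ c, supp (π c) c) (hπ' : ∀ c, supp (π' c) c)
    (h : univ.image (fun c => g (π c, c)) = univ.image (fun c => g (π' c, c))) : π = π' := by
  ext c
  have hc : g (π' c, c) ∈ univ.image (fun c => g (π c, c)) := by
    rw [h]; exact mem_image_of_mem _ (mem_univ c)
  obtain ⟨c₀, -, hc₀⟩ := mem_image.1 hc
  obtain ⟨h₁, h₂⟩ := Prod.ext_iff.1 (hg (hπ c₀) (hπ' c) hc₀)
  simp only at h₁ h₂
  rw [← h₂, h₁, h₂]

theorem det_ne_zero_of_eq_pow_two_pow {κ : Type*} [Fintype κ] [DecidableEq κ]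
    {M : Matrix κ κ ℤ} {supp : κ → κ → Prop} {g : κ × κ → ℕ} {B : ℤ} (hdiag : ∀ c, supp c c)
    (hg : Set.InjOn g {x | supp x.1 x.2}) (hM : ∀ c c', supp c c' → M c c' = B ^ 2 ^ g (c, c'))
    (hM0 : ∀ c c', ¬ supp c c' → M c c' = 0) (hB : ((Fintype.card κ)! : ℤ) < B) :
    M.det ≠ 0 := by
  classical
  set A := univ.filter fun π : Equiv.Perm κ => ∀ c, supp (π c) c
  have hprod : ∀ π ∈ A, ∏ c, M (π c) c = B ^ ∑ c, 2 ^ g (π c, c) := fun π hπ => by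
    rw [← prod_pow_eq_pow_sum]
    exact prod_congr rfl fun c _ => hM _ _ ((mem_filter.1 hπ).2 c)
  have hdet : M.det = ∑ π ∈ A, (Equiv.Perm.sign π : ℤ) * B ^ ∑ c, 2 ^ g (π c, c) := by
    rw [Matrix.det_apply, ← sum_subset (subset_univ A) fun π _ hπ => ?_]
    · exact sum_congr rfl fun π hπ => by rw [Units.smul_def, hprod π hπ, smul_eq_mul]
    · obtain ⟨c, hc⟩ : ∃ c, ¬ supp (π c) c := by simpa [A] using hπ
      rw [prod_eq_zero (f := fun i => M (π i) i) (mem_univ c) (hM0 _ _ hc), smul_zero]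
  have hsum : ∀ π ∈ A, ∑ c, 2 ^ g (π c, c) = ∑ j ∈ univ.image (fun c => g (π c, c)), 2 ^ j :=
    fun π hπ => (sum_image fun c _ c' _ h =>
      (Prod.ext_iff.1 (hg ((mem_filter.1 hπ).2 c) ((mem_filter.1 hπ).2 c') h)).2).symm
  rw [hdet]
  refine sum_units_mul_pow_ne_zero ⟨1, by simp [A, hdiag]⟩ _ (fun π hπ π' hπ' h => ?_) ?_
  · refine perm_eq_of_image_eq hg (mem_filter.1 hπ).2 (mem_filter.1 hπ').2
      (geomSum_injective le_rfl ?_)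
    simp only [← hsum π hπ, ← hsum π' hπ']
    exact h
  · calc (#A : ℤ) ≤ (Fintype.card κ)! := by
          exact_mod_cast (card_le_univ A).trans Fintype.card_perm.le
      _ < B := hB

theorem intCast_zmod_ne_zero {p : ℕ} {z : ℤ} (hz : z ≠ 0) (hzp : |z| < p) : (z : ZMod p) ≠ 0 := by
  rw [Ne, ZMod.intCast_zmod_eq_zero_iff_dvd]
  exact fun h => hz (Int.eq_zero_of_abs_lt_dvd h hzp)

theorem isSC_of_forall_eq_zero {F : Type} [AddGroup F] {k n A w : ℕ} {C : PacketCode F k n}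
    (hC : ∀ m m' u, C.parity (m - m') u = C.parity m u - C.parity m' u)
    (h : ∀ (δ : ℤ → Fin k → F) (t : ℤ) (E : Finset ℤ), (∀ x ∈ E, t ≤ x ∧ x ≤ t + w) → t ∈ E →
      #E ≤ A → (∀ s < t, δ s = 0) →
      (∀ s, t ≤ s → s ≤ t + w → s ∉ E → δ s = 0 ∧ C.parity δ s = 0) → δ t = 0) :
    IsSC C A w := by
  intro m m' _ _ t _ E hE htE hEA hpast hun
  refine sub_eq_zero.1 (h (m - m') t E hE htE hEA (fun s hs => sub_eq_zero.2 (hpast s hs))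
    fun s h₁ h₂ h₃ => ?_)
  obtain ⟨hm, hp⟩ := hun s h₁ h₂ h₃
  exact ⟨sub_eq_zero.2 hm, by rw [hC, hp, sub_self]⟩

section ConvCode

variable {R : Type} [CommRing R] {K a τ : ℕ}

/-- The coefficient of `m s i` in parity symbol `l` at time `u` depends on `u` and `s` only
through their residues modulo `τ + 1` (the casts to `ZMod (τ + 1)`). -/
noncomputable def convCode (γ : ZMod (τ + 1) → Fin a → ZMod (τ + 1) → Fin K → R) :
    PacketCode R K (K + a) where
  parity m u l := ∑ s ∈ Ico (u - τ) u, ∑ i, γ u (l.cast (Nat.add_sub_cancel_left K a)) s i * m s i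
  causal m m' t h := funext fun _ => sum_congr rfl fun s hs => by
    rw [h s (mem_Ico.1 hs).2.le]

theorem convCode_parity_sub (γ : ZMod (τ + 1) → Fin a → ZMod (τ + 1) → Fin K → R)
    (m m' : ℤ → Fin K → R) (u : ℤ) :
    (convCode γ).parity (m - m') u = (convCode γ).parity m u - (convCode γ).parity m' u := by
  funext l
  simp [convCode, mul_sub, sum_sub_distrib]

theorem convCode_parity_eq_sum (γ : ZMod (τ + 1) → Fin a → ZMod (τ + 1) → Fin K → R)
    {δ : ℤ → Fin K → R} {S : Finset ℤ} {u : ℤ} (hS : ∀ s ∈ S, s < u → u - τ ≤ s)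
    (hδ : ∀ s ∈ Ico (u - τ) u, s ∉ S → δ s = 0) (l : Fin a) :
    (convCode γ).parity δ u (l.cast (Nat.add_sub_cancel_left K a).symm) =
      ∑ s ∈ S with s < u, ∑ i, γ u l s i * δ s i := by
  change ∑ s ∈ Ico (u - τ) u, ∑ i, γ u l s i * δ s i = _
  refine (sum_subset (fun s hs => ?_) fun s hs hsS => ?_).symm
  · obtain ⟨hsS, hsu⟩ := mem_filter.1 hs
    exact mem_Ico.2 ⟨hS s hsS hsu, hsu⟩
  · rw [hδ s hs fun h => hsS (mem_filter.2 ⟨h, (mem_Ico.1 hs).2⟩)]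
    simp

/-- Row `c` is the parity equation `row c = (u, l)`, restricted to the unknown message symbols
indexed by `S × Fin K`. -/
def sysMatrix (γ : ZMod (τ + 1) → Fin a → ZMod (τ + 1) → Fin K → R) {S : Finset ℤ}
    (row : S × Fin K → ℤ × Fin a) : Matrix (S × Fin K) (S × Fin K) R :=
  Matrix.of fun c c' => if (c'.1 : ℤ) < (row c).1 then γ (row c).1 (row c).2 c'.1 c'.2 else 0

theorem sysMatrix_mulVec (γ : ZMod (τ + 1) → Fin a → ZMod (τ + 1) → Fin K → R)
    {S : Finset ℤ} (row : S × Fin K → ℤ × Fin a) (δ : ℤ → Fin K → R) (c : S × Fin K) :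
    (sysMatrix γ row *ᵥ fun c' => δ c'.1 c'.2) c =
      ∑ s ∈ S with s < (row c).1, ∑ i, γ (row c).1 (row c).2 s i * δ s i := by
  simp only [Matrix.mulVec, dotProduct, sysMatrix, Matrix.of_apply, Fintype.sum_prod_type,
    ite_mul, zero_mul, sum_filter]
  rw [← sum_coe_sort S]
  exact sum_congr rfl fun s _ => by split_ifs <;> simp

end ConvCode

section Dominant

variable (R : Type) [CommRing R] (a K τ : ℕ)

/-- Exceeds `q!` for every system of size `q ≤ a * K`, so one term dominates each determinant. -/
def domBase : ℕ := (a * K)! + 1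

/-- Each coefficient index gets its own exponent `j` in `B ^ 2 ^ j`, so that a product of
distinct coefficients determines the set of its factors. -/
noncomputable def domCoeff : ZMod (τ + 1) → Fin a → ZMod (τ + 1) → Fin K → R :=
  fun ρ l σ i => (domBase a K : R) ^
    2 ^ (Fintype.equivFin (ZMod (τ + 1) × Fin a × ZMod (τ + 1) × Fin K) (ρ, l, σ, i) : ℕ)

def detBound : ℕ :=
  (a * K)! * (domBase a K ^ 2 ^ Fintype.card (ZMod (τ + 1) × Fin a × ZMod (τ + 1) × Fin K)) ^
    (a * K)

variable {R a K τ}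

theorem sysMatrix_domCoeff_eq_map {S : Finset ℤ} (row : S × Fin K → ℤ × Fin a) :
    sysMatrix (domCoeff R a K τ) row =
      (Int.castRingHom R).mapMatrix (sysMatrix (domCoeff ℤ a K τ) row) := by
  ext c c'
  simp only [RingHom.mapMatrix_apply, Matrix.map_apply, sysMatrix, Matrix.of_apply, domCoeff]
  split_ifs <;> simp

theorem abs_det_sysMatrix_domCoeff_le {S : Finset ℤ} (hSa : #S ≤ a)
    (row : S × Fin K → ℤ × Fin a) : |(sysMatrix (domCoeff ℤ a K τ) row).det| ≤ detBound a K τ := by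
  set N := Fintype.card (ZMod (τ + 1) × Fin a × ZMod (τ + 1) × Fin K)
  have hB : (1 : ℤ) ≤ domBase a K := by simp [domBase]
  have hentry : ∀ c c', |sysMatrix (domCoeff ℤ a K τ) row c c'| ≤ (domBase a K : ℤ) ^ 2 ^ N := by
    intro c c'
    simp only [sysMatrix, Matrix.of_apply, domCoeff]
    split_ifs
    · rw [abs_of_nonneg (by positivity)]
      exact pow_le_pow_right₀ hB (Nat.pow_le_pow_right two_pos (Fin.is_lt _).le)
    · simp only [abs_zero]; positivity
  have hcard : Fintype.card (S × Fin K) ≤ a * K := by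
    simpa using Nat.mul_le_mul_right K hSa
  calc |(sysMatrix (domCoeff ℤ a K τ) row).det|
      ≤ (Fintype.card (S × Fin K))! • ((domBase a K : ℤ) ^ 2 ^ N) ^ Fintype.card (S × Fin K) :=
        Matrix.det_le (abv := AbsoluteValue.abs) hentry
    _ ≤ (a * K)! * ((domBase a K : ℤ) ^ 2 ^ N) ^ (a * K) := by
        rw [nsmul_eq_mul]
        gcongr
        exact one_le_pow₀ hB
    _ = detBound a K τ := by simp [detBound, N]

theorem det_sysMatrix_domCoeff_ne_zero {S : Finset ℤ} {t : ℤ}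
    (hS : ∀ s ∈ S, t ≤ s ∧ s ≤ t + τ) (hSa : #S ≤ a) {row : S × Fin K → ℤ × Fin a}
    (hrow : Function.Injective row) (hrow' : ∀ c, (c.1 : ℤ) < (row c).1 ∧ (row c).1 ≤ t + τ) :
    (sysMatrix (domCoeff ℤ a K τ) row).det ≠ 0 := by
  have hwin := intCast_zmod_injOn_Icc t τ
  let g : (S × Fin K) × (S × Fin K) → ℕ := fun x =>
    Fintype.equivFin _ (((row x.1).1 : ZMod (τ + 1)), (row x.1).2, ((x.2.1 : ℤ) : ZMod (τ + 1)),
      x.2.2)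
  refine det_ne_zero_of_eq_pow_two_pow (B := domBase a K)
    (supp := fun c c' => (c'.1 : ℤ) < (row c).1) (g := g) (fun c => (hrow' c).1)
    (fun x _ y _ h => ?_)
    (fun c c' h => by simp [sysMatrix, domCoeff, h, g]) (fun c c' h => by simp [sysMatrix, h]) ?_
  · have hrowwin : ∀ c, (row c).1 ∈ Set.Icc t (t + τ) := fun c =>
      ⟨((hS _ c.1.2).1.trans_lt (hrow' c).1).le, (hrow' c).2⟩
    have h' := (Fintype.equivFin _).injective (Fin.val_injective h)
    simp only [Prod.mk.injEq] at h'
    obtain ⟨h₁, h₂, h₃, h₄⟩ := h'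
    have hc : x.1 = y.1 := hrow (Prod.ext (hwin (hrowwin x.1) (hrowwin y.1) h₁) h₂)
    have hc' : (x.2.1 : ℤ) = y.2.1 := hwin (hS _ x.2.1.2) (hS _ y.2.1.2) h₃
    exact Prod.ext hc (Prod.ext (Subtype.ext hc') h₄)
  · have hcard : Fintype.card (S × Fin K) ≤ a * K := by
      simpa using Nat.mul_le_mul_right K hSa
    exact_mod_cast Nat.lt_succ_of_le (Nat.factorial_le hcard)

end Dominant

noncomputable def dominantCode (p a K τ : ℕ) : PacketCode (ZMod p) K (K + a) :=
  convCode (domCoeff (ZMod p) a K τ)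

theorem card_inter_Ico_add_card_inter_Ico (E : Finset ℤ) {t e Θ : ℤ} (hte : t ≤ e) (heΘ : e ≤ Θ) :
    #(E ∩ Ico t e) + #(E ∩ Ico e Θ) = #(E ∩ Ico t Θ) := by
  rw [← Ico_union_Ico_eq_Ico hte heΘ, inter_union_distrib_left, card_union_of_disjoint
    ((Ico_disjoint_Ico_consecutive t e Θ).mono inter_subset_right inter_subset_right)]

/-- A cut `Θ` maximising `a (Θ - t) - (τ + 1) #(E ∩ [t, Θ))` satisfies Hall's condition for the
erasures before it. -/
theorem exists_hall_cut {a τ : ℕ} {t : ℤ} {E : Finset ℤ} (hE : ∀ x ∈ E, t ≤ x ∧ x ≤ t + τ)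
    (hEa : #E ≤ a) : ∃ Θ, t < Θ ∧ Θ ≤ t + τ + 1 ∧
      ∀ e ∈ E, e < Θ → ((τ : ℤ) + 1) * #(E ∩ Ico e Θ) ≤ a * (Θ - e) := by
  let f (x : ℤ) : ℤ := a * (x - t) - ((τ : ℤ) + 1) * #(E ∩ Ico t x)
  obtain ⟨Θ, hΘ, hmax⟩ := exists_max_image (Icc (t + 1) (t + τ + 1)) f
    ⟨t + 1, mem_Icc.2 ⟨le_rfl, by omega⟩⟩
  obtain ⟨htΘ, hΘτ⟩ := mem_Icc.1 hΘ
  refine ⟨Θ, by omega, hΘτ, fun e he heΘ => ?_⟩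
  have hte := (hE e he).1
  have hfe : f e ≤ f Θ := by
    rcases hte.eq_or_lt with rfl | hlt
    · have hend : 0 ≤ f (t + τ + 1) := by
        have : (#(E ∩ Ico t (t + τ + 1)) : ℤ) ≤ a := by
          exact_mod_cast (card_le_card inter_subset_left).trans hEa
        simp only [f]
        nlinarith
      have h0 : f t = 0 := by simp [f]
      exact h0 ▸ hend.trans (hmax _ (mem_Icc.2 ⟨by omega, le_rfl⟩))
    · exact hmax e (mem_Icc.2 ⟨hlt, by linarith [(hE e he).2]⟩)
  have hsplit := card_inter_Ico_add_card_inter_Ico E hte heΘ.le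
  simp only [f, ← hsplit, Nat.cast_add] at hfe
  nlinarith

section Hall

variable {a K τ : ℕ} {E S : Finset ℤ} {Θ : ℤ}

theorem card_le_card_biUnion_unerased (hKa : K + a ≤ τ + 1) (hS : ∀ s ∈ S, s ∈ E ∧ s < Θ)
    (hHall : ∀ e ∈ E, e < Θ → ((τ : ℤ) + 1) * #(E ∩ Ico e Θ) ≤ a * (Θ - e))
    (s : Finset (S × Fin K)) :
    #s ≤ #(s.biUnion fun c => (Ico (c.1 : ℤ) Θ \ E) ×ˢ (univ : Finset (Fin a))) := by
  rcases s.eq_empty_or_nonempty with rfl | hs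
  · simp
  -- The earliest erasure `e` in `s` gives `#s ≤ K #(E ∩ [e, Θ))`, while its neighbourhood
  -- alone has `a #([e, Θ) \ E)` elements.
  obtain ⟨c₀, hc₀, hmin⟩ := exists_min_image s (fun c => (c.1 : ℤ)) hs
  set e : ℤ := c₀.1.1
  obtain ⟨heE, heΘ⟩ := hS e c₀.1.2
  have hs_le : (#s : ℤ) ≤ #(E ∩ Ico e Θ) * K := by
    rw [← card_image_of_injective s (f := fun c => ((c.1 : ℤ), c.2))
      fun x y h => Prod.ext (Subtype.ext (Prod.ext_iff.1 h).1) (Prod.ext_iff.1 h).2]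
    refine Nat.cast_le.2 ((card_le_card (t := (E ∩ Ico e Θ) ×ˢ (univ : Finset (Fin K)))
      fun y hy => ?_).trans_eq (by simp))
    obtain ⟨c, hc, rfl⟩ := mem_image.1 hy
    exact mem_product.2 ⟨mem_inter.2 ⟨(hS _ c.1.2).1, mem_Ico.2 ⟨hmin c hc, (hS _ c.1.2).2⟩⟩,
      mem_univ _⟩
  have hnbhd : (#(Ico e Θ \ E) * a : ℤ) ≤
      #(s.biUnion fun c => (Ico (c.1 : ℤ) Θ \ E) ×ˢ (univ : Finset (Fin a))) := by
    have := card_le_card (subset_biUnion_of_mem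
      (fun c => (Ico (c.1 : ℤ) Θ \ E) ×ˢ (univ : Finset (Fin a))) hc₀)
    simp only [card_product, card_univ, Fintype.card_fin] at this
    exact_mod_cast this
  have hcount : (#(Ico e Θ \ E) : ℤ) + #(E ∩ Ico e Θ) = Θ - e := by
    have h := card_sdiff_add_card_inter (Ico e Θ) E
    rw [Int.card_Ico, inter_comm] at h
    omega
  have hKa' : ((K : ℤ) + a) * #(E ∩ Ico e Θ) ≤ ((τ : ℤ) + 1) * #(E ∩ Ico e Θ) :=
    mul_le_mul_of_nonneg_right (by exact_mod_cast hKa) (by positivity)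
  have hH := hHall e heE heΘ
  have : (#s : ℤ) ≤ #(s.biUnion fun c => (Ico (c.1 : ℤ) Θ \ E) ×ˢ (univ : Finset (Fin a))) := by
    nlinarith
  exact_mod_cast this

theorem exists_injective_row (hKa : K + a ≤ τ + 1) (hS : ∀ s ∈ S, s ∈ E ∧ s < Θ)
    (hHall : ∀ e ∈ E, e < Θ → ((τ : ℤ) + 1) * #(E ∩ Ico e Θ) ≤ a * (Θ - e)) :
    ∃ row : S × Fin K → ℤ × Fin a, Function.Injective row ∧
      ∀ c, (c.1 : ℤ) < (row c).1 ∧ (row c).1 < Θ ∧ (row c).1 ∉ E := by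
  obtain ⟨row, hinj, hmem⟩ := (all_card_le_biUnion_card_iff_exists_injective _).1
    (card_le_card_biUnion_unerased hKa hS hHall)
  refine ⟨row, hinj, fun c => ?_⟩
  obtain ⟨hu, -⟩ := mem_product.1 (hmem c)
  obtain ⟨⟨hcu, huΘ⟩, huE⟩ := (mem_sdiff.1 hu).imp_left mem_Ico.1
  exact ⟨hcu.lt_of_ne fun h => huE (h ▸ (hS _ c.1.2).1), huΘ, huE⟩

end Hall

section DominantCode

variable {p a K τ : ℕ} [Fact p.Prime]

theorem dominantCode_eq_zero (hp : detBound a K τ < p) (hKa : K + a ≤ τ + 1) {w : ℕ} (hw : w ≤ τ)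
    {t Θ : ℤ} {E : Finset ℤ} (hE : ∀ x ∈ E, t ≤ x ∧ x ≤ t + w) (hEa : #E ≤ a) (htE : t ∈ E)
    (htΘ : t < Θ) (hΘ : Θ ≤ t + w + 1)
    (hHall : ∀ e ∈ E, e < Θ → ((τ : ℤ) + 1) * #(E ∩ Ico e Θ) ≤ a * (Θ - e))
    {δ : ℤ → Fin K → ZMod p} (hpast : ∀ s < t, δ s = 0)
    (hun : ∀ s, t ≤ s → s ≤ t + w → s ∉ E → δ s = 0 ∧ (dominantCode p a K τ).parity δ s = 0) :
    δ t = 0 := by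
  set S := E.filter (· < Θ)
  have hSE : ∀ s ∈ S, s ∈ E ∧ s < Θ := fun s hs => mem_filter.1 hs
  have hSwin : ∀ s ∈ S, t ≤ s ∧ s ≤ t + τ := fun s hs => by
    have := hE s (hSE s hs).1; omega
  obtain ⟨row, hinj, hrow⟩ := exists_injective_row hKa hSE hHall
  have hrowwin : ∀ c, t ≤ (row c).1 ∧ (row c).1 ≤ t + w := fun c => by
    have := hSwin _ c.1.2; have := hrow c; omega
  have hdet : (sysMatrix (domCoeff (ZMod p) a K τ) row).det ≠ 0 := by
    rw [sysMatrix_domCoeff_eq_map, ← RingHom.map_det]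
    exact intCast_zmod_ne_zero
      (det_sysMatrix_domCoeff_ne_zero hSwin ((card_filter_le _ _).trans hEa) hinj
        fun c => ⟨(hrow c).1, (hrowwin c).2.trans (by omega)⟩)
      ((abs_det_sysMatrix_domCoeff_le ((card_filter_le _ _).trans hEa) row).trans_lt
        (by exact_mod_cast hp))
  have hsys : sysMatrix (domCoeff (ZMod p) a K τ) row *ᵥ (fun c => δ c.1 c.2) = 0 := by
    funext c
    obtain ⟨hcu, huΘ, huE⟩ := hrow c
    rw [sysMatrix_mulVec,
      ← convCode_parity_eq_sum (S := S) _ (fun s hs _ => ?_) (fun s hs hsS => ?_)]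
    · exact congrFun (hun _ (hrowwin c).1 (hrowwin c).2 huE).2 _
    · have := hSwin s hs; have := hrowwin c; omega
    · obtain ⟨-, hsu⟩ := mem_Ico.1 hs
      rcases lt_or_ge s t with hst | hts
      · exact hpast s hst
      · exact (hun s hts (by have := hrowwin c; omega)
          fun hsE => hsS (mem_filter.2 ⟨hsE, by omega⟩)).1
  have hzero := Matrix.eq_zero_of_mulVec_eq_zero hdet hsys
  exact funext fun i => congrFun hzero (⟨t, mem_filter.2 ⟨htE, htΘ⟩⟩, i)

theorem dominantCode_isSC (hp : detBound a K τ < p) (hKa : K + a ≤ τ + 1) :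
    IsSC (dominantCode p a K τ) a τ := by
  refine isSC_of_forall_eq_zero (convCode_parity_sub _) fun δ t E hE htE hEa hpast hun => ?_
  obtain ⟨Θ, htΘ, hΘ, hHall⟩ := exists_hall_cut hE hEa
  exact dominantCode_eq_zero hp hKa le_rfl hE hEa htE htΘ hΘ hHall hpast hun

theorem dominantCode_isSC_one (hp : detBound a K τ < p) (hKa : K + a ≤ τ + 1) {r : ℕ}
    (hrτ : r ≤ τ) (hra : τ + 1 ≤ a * (r + 1)) : IsSC (dominantCode p a K τ) 1 r := by
  refine isSC_of_forall_eq_zero (convCode_parity_sub _) fun δ t E hE htE hE1 hpast hun => ?_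
  obtain rfl : E = {t} :=
    eq_singleton_iff_unique_mem.2 ⟨htE, fun x hx => card_le_one.1 hE1 x hx t htE⟩
  have ha : 1 ≤ a := by
    by_contra! h; simp_all
  refine dominantCode_eq_zero hp hKa hrτ hE (hE1.trans ha) htE (by omega) le_rfl
    (fun e he _ => ?_) hpast hun
  rw [mem_singleton.1 he]
  have : #({t} ∩ Ico t (t + r + 1)) ≤ 1 := card_le_one.2 fun x hx y hy => by
    rw [mem_singleton.1 (mem_inter.1 hx).1, mem_singleton.1 (mem_inter.1 hy).1]
  have : ((τ : ℤ) + 1) ≤ a * (r + 1) := by exact_mod_cast hra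
  nlinarith

end DominantCode

theorem sub_div_min_eq {a τ r : ℕ} (ha : 0 < a) :
    (((min (τ + 1) (a * (r + 1)) : ℕ) : ℚ) - a) / (min (τ + 1) (a * (r + 1)) : ℕ) =
      min (((τ : ℚ) + 1 - a) / ((τ : ℚ) + 1)) ((r : ℚ) / ((r : ℚ) + 1)) := by
  have ha' : (0 : ℚ) < a := by exact_mod_cast ha
  have hr : (r : ℚ) / (r + 1) = (a * (r + 1) - a) / (a * (r + 1)) := by
    field_simp; ring
  rcases le_total (τ + 1) (a * (r + 1)) with h | h
  · have h' : (τ : ℚ) + 1 ≤ a * (r + 1) := by exact_mod_cast h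
    rw [min_eq_left h, min_eq_left, Nat.cast_add, Nat.cast_one]
    rw [hr, div_le_div_iff₀ (by positivity) (by positivity)]
    nlinarith
  · have h' : (a : ℚ) * (r + 1) ≤ τ + 1 := by exact_mod_cast h
    rw [min_eq_right h, min_eq_right, hr]
    · push_cast; ring
    rw [hr, div_le_div_iff₀ (by positivity) (by positivity)]
    nlinarith

theorem exists_isLRSC_rate_eq {a τ r : ℕ} (ha : 1 ≤ a) (haτ : a ≤ τ) (hr : 1 ≤ r) (hrτ : r ≤ τ) :
    ∃ (F : Type) (_ : Field F) (_ : Fintype F) (k n : ℕ) (C : PacketCode F k n),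
      1 ≤ k ∧ k < n ∧ IsLRSC C a τ r ∧
      (k : ℚ) / n = min (((τ : ℚ) + 1 - a) / ((τ : ℚ) + 1)) ((r : ℚ) / ((r : ℚ) + 1)) := by
  set T := min (τ + 1) (a * (r + 1))
  have har : a + 1 ≤ a * (r + 1) := by nlinarith
  have hT : a + 1 ≤ T := le_min (by omega) har
  obtain ⟨p, hp, hprime⟩ := Nat.exists_infinite_primes (detBound a (T - a) (T - 1) + 1)
  have : Fact p.Prime := ⟨hprime⟩
  refine ⟨ZMod p, inferInstance, inferInstance, T - a, T - a + a, dominantCode p a (T - a) (T - 1),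
    by omega, by omega, ⟨?_, ?_⟩, ?_⟩
  · exact (dominantCode_isSC hp (by omega)).mono (by omega)
  · have : r + 1 ≤ a * (r + 1) := Nat.le_mul_of_pos_left _ ha
    exact dominantCode_isSC_one hp (by omega) (by omega) (by omega)
  · rw [← sub_div_min_eq (τ := τ) (r := r) (by omega : 0 < a)]
    rw [Nat.sub_add_cancel (by omega : a ≤ T), Nat.cast_sub (by omega : a ≤ T)]

theorem optimal_rate_LRSC (a τ r : ℕ) (ha : 1 < a) (haτ : a ≤ τ) (hr : 1 ≤ r)
    (hrτ : r < τ) :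
    (∀ (F : Type) [Field F] [Fintype F] (k n : ℕ) (C : PacketCode F k n),
        1 ≤ k → k < n → IsLRSC C a τ r →
        (k : ℚ) / n ≤ min (((τ : ℚ) + 1 - a) / ((τ : ℚ) + 1)) ((r : ℚ) / ((r : ℚ) + 1))) ∧
    (∃ (F : Type) (_ : Field F) (_ : Fintype F) (k n : ℕ) (C : PacketCode F k n),
        1 ≤ k ∧ k < n ∧ IsLRSC C a τ r ∧
        (k : ℚ) / n = min (((τ : ℚ) + 1 - a) / ((τ : ℚ) + 1)) ((r : ℚ) / ((r : ℚ) + 1))) := by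
  refine ⟨fun F _ _ k n C _ _ hC => le_min (hC.1.rate_le (by omega) (by omega)) ?_,
    exists_isLRSC_rate_eq (by omega) haτ hr hrτ.le⟩
  simpa using hC.2.rate_le le_rfl (by omega)
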